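/- arXiv:1812.00456 — 3 statements merged into one kernel-verified Lean document; each statement's English description precedes it below -/
import Mathlib

section
/- Consider a finite discounted MDP and inverse temperature τ ≥ 0. For every initial Q-function Q_0 : S → A → ℝ, every k ≥ 0, and every (s,a), (T_soft^k Q_0)(s,a) ≤ (T^k Q_0)(s,a), where T is the standard Bellman operator and T_soft is the softmax Bellman operator. -/
/-- The softmax-weighted value `g_x(τ) = (∑ a, exp(τ·x_a)·x_a) / (∑ a, exp(τ·x_a))`
over a finite action type. -/
noncomputable def gval {A : Type*} [Fintype A] (x : A → ℝ) (τ : ℝ) : ℝ :=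
  (∑ a, Real.exp (τ * x a) * x a) / (∑ a, Real.exp (τ * x a))

/-- The softmax Bellman operator
`(T_soft Q)(s,a) = R(s,a) + γ·∑ s', P(s'|s,a)·g_{Q(s',·)}(τ)`. -/
noncomputable def Tsoft {S A : Type*} [Fintype S] [Fintype A]
    (P : S → A → S → ℝ) (R : S → A → ℝ) (γ τ : ℝ) (Q : S → A → ℝ) :
    S → A → ℝ :=
  fun s a => R s a + γ * ∑ s', P s a s' * gval (Q s') τ

/-- The standard Bellman operator
`(T Q)(s,a) = R(s,a) + γ·∑ s', P(s'|s,a)·max_{a'} Q(s',a')`. -/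
noncomputable def Tstd {S A : Type*} [Fintype S] [Fintype A] [Nonempty A]
    (P : S → A → S → ℝ) (R : S → A → ℝ) (γ : ℝ) (Q : S → A → ℝ) :
    S → A → ℝ :=
  fun s a => R s a + γ * ∑ s', P s a s' * Finset.univ.sup' Finset.univ_nonempty (Q s')

/-!
A softmax-weighted average of the values `Q(s',·)` never exceeds their maximum, so `T_soft Q ≤ T Q`
pointwise for every `Q`. Since `T` is monotone (the weights `γ·P(s'|s,a)` are nonnegative), the
comparison propagates along the iterates: `T_soft^[k] ≤ T^[k]`.
-/

open Finset

theorem gval_le_sup' {A : Type*} [Fintype A] [Nonempty A] (x : A → ℝ) (τ : ℝ) :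
    gval x τ ≤ univ.sup' univ_nonempty x := by
  have hpos : 0 < ∑ a, Real.exp (τ * x a) := sum_pos (fun a _ => Real.exp_pos _) univ_nonempty
  rw [gval, div_le_iff₀ hpos, mul_sum]
  refine sum_le_sum fun a _ => ?_
  rw [mul_comm]
  exact mul_le_mul_of_nonneg_right (le_sup' x (mem_univ a)) (Real.exp_pos _).le

section Bellman

variable {S A : Type*} [Fintype S] [Fintype A] [Nonempty A]
  {P : S → A → S → ℝ} {R : S → A → ℝ} {γ : ℝ}

theorem Tsoft_le_Tstd (hγ : 0 ≤ γ) (hP : ∀ s a s', 0 ≤ P s a s') (τ : ℝ) :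
    Tsoft P R γ τ ≤ Tstd P R γ := fun Q s a => by
  unfold Tsoft Tstd
  gcongr with s' _
  · exact hP s a s'
  · exact gval_le_sup' _ τ

theorem Tstd_monotone (hγ : 0 ≤ γ) (hP : ∀ s a s', 0 ≤ P s a s') :
    Monotone (Tstd P R γ) := fun Q Q' hQQ' s a => by
  unfold Tstd
  gcongr with s' _ b
  · exact hP s a s'
  · exact hQQ' s' b

end Bellman

theorem tsoft_iterate_le_tstd_iterate_general
    {S A : Type*} [Fintype S] [Fintype A] [Nonempty A]
    (P : S → A → S → ℝ) (R : S → A → ℝ) (γ τ : ℝ)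
    (hγ : γ ∈ Set.Ioo (0 : ℝ) 1)
    (hP : ∀ s a s', 0 ≤ P s a s')
    (Q0 : S → A → ℝ) (k : ℕ) (s : S) (a : A) :
    ((Tsoft P R γ τ)^[k] Q0) s a ≤ ((Tstd P R γ)^[k] Q0) s a :=
  (Tstd_monotone hγ.1.le hP).le_iterate_of_le (Tsoft_le_Tstd hγ.1.le hP τ) k Q0 s a

/-- The softmax Bellman iterates are pointwise dominated by the standard Bellman
iterates: `(T_soft^k Q_0)(s,a) ≤ (T^k Q_0)(s,a)`. -/
theorem tsoft_iterate_le_tstd_iterate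
    {S A : Type*} [Fintype S] [Fintype A] [Nonempty S] [Nonempty A]
    (P : S → A → S → ℝ) (R : S → A → ℝ) (γ τ : ℝ)
    (hγ : γ ∈ Set.Ioo (0 : ℝ) 1) (hτ : 0 ≤ τ)
    (hP : ∀ s a s', 0 ≤ P s a s') (hP1 : ∀ s a, ∑ s', P s a s' = 1)
    (Q0 : S → A → ℝ) (k : ℕ) (s : S) (a : A) :
    ((Tsoft P R γ τ)^[k] Q0) s a ≤ ((Tstd P R γ)^[k] Q0) s a :=
  tsoft_iterate_le_tstd_iterate_general P R γ τ hγ hP Q0 k s a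
end

section
/- Consider a finite discounted MDP and inverse temperature τ ≥ 0. Let Q_0 : S → A → ℝ and let ζ ≥ 0 be such that for every j ≥ 0 and every state s, max_a (T_soft^j Q_0)(s,a) − g_{(T_soft^j Q_0)(s,·)}(τ) ≤ ζ. Then for every k ≥ 0 and every (s,a), (T^k Q_0)(s,a) − (T_soft^k Q_0)(s,a) ≤ (∑_{j=1}^{k} γ^j)·ζ = γ·(1 − γ^k)/(1 − γ)·ζ. -/
private lemma sup'_sub_sup'_le {A : Type*} [Fintype A] [Nonempty A]
    (f g : A → ℝ) (B : ℝ) (h : ∀ a, f a - g a ≤ B) :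
    Finset.univ.sup' Finset.univ_nonempty f - Finset.univ.sup' Finset.univ_nonempty g ≤ B := by
  rw [sub_le_iff_le_add]
  apply Finset.sup'_le
  intro a _
  have h2 := Finset.le_sup' g (Finset.mem_univ a)
  linarith [h a]

private lemma geom_icc (γ : ℝ) (hγ : γ ≠ 1) (k : ℕ) :
    (∑ j ∈ Finset.Icc 1 k, γ ^ j) = γ * (1 - γ ^ k) / (1 - γ) := by
  have h1 : Finset.Icc 1 k = Finset.Ico 1 (k + 1) := by
    rw [Finset.Ico_add_one_right_eq_Icc]
  rw [h1, geom_sum_Ico hγ (Nat.le_add_left 1 k)]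
  have h1 : γ - 1 ≠ 0 := sub_ne_zero.mpr hγ
  have h2 : (1 : ℝ) - γ ≠ 0 := sub_ne_zero.mpr hγ.symm
  rw [div_eq_div_iff h1 h2]
  ring

/-- If `ζ` uniformly bounds the max–softmax gap over all softmax Bellman iterates
and all states, then
`(T^k Q_0)(s,a) − (T_soft^k Q_0)(s,a) ≤ (∑_{j=1}^k γ^j)·ζ = γ·(1 − γ^k)/(1 − γ)·ζ`. -/
theorem tstd_sub_tsoft_iterate_le_geom_zeta
    {S A : Type*} [Fintype S] [Fintype A] [Nonempty S] [Nonempty A]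
    (P : S → A → S → ℝ) (R : S → A → ℝ) (γ τ : ℝ)
    (hγ : γ ∈ Set.Ioo (0 : ℝ) 1) (hτ : 0 ≤ τ)
    (hP : ∀ s a s', 0 ≤ P s a s') (hP1 : ∀ s a, ∑ s', P s a s' = 1)
    (Q0 : S → A → ℝ) (ζ : ℝ) (hζ0 : 0 ≤ ζ)
    (hζ : ∀ (j : ℕ) (s : S),
      Finset.univ.sup' Finset.univ_nonempty (((Tsoft P R γ τ)^[j] Q0) s) -
        gval (((Tsoft P R γ τ)^[j] Q0) s) τ ≤ ζ)
    (k : ℕ) (s : S) (a : A) :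
    ((Tstd P R γ)^[k] Q0) s a - ((Tsoft P R γ τ)^[k] Q0) s a ≤
        (∑ j ∈ Finset.Icc 1 k, γ ^ j) * ζ ∧
      (∑ j ∈ Finset.Icc 1 k, γ ^ j) * ζ = γ * (1 - γ ^ k) / (1 - γ) * ζ := by
  obtain ⟨hγ0, hγ1⟩ := hγ
  have hγne : γ ≠ 1 := ne_of_lt hγ1
  constructor
  · -- main bound, by induction on k (generalizing s, a)
    induction k generalizing s a with
    | zero => simp
    | succ k ih =>
      rw [Function.iterate_succ_apply', Function.iterate_succ_apply']
      set Qk := (Tstd P R γ)^[k] Q0 with hQk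
      set Qsk := (Tsoft P R γ τ)^[k] Q0 with hQsk
      have key : ∀ s' : S,
          Finset.univ.sup' Finset.univ_nonempty (Qk s') - gval (Qsk s') τ ≤
            (∑ j ∈ Finset.Icc 1 k, γ ^ j) * ζ + ζ := by
        intro s'
        have h1 : Finset.univ.sup' Finset.univ_nonempty (Qk s') -
            Finset.univ.sup' Finset.univ_nonempty (Qsk s') ≤
            (∑ j ∈ Finset.Icc 1 k, γ ^ j) * ζ :=
          sup'_sub_sup'_le _ _ _ (fun a' => ih s' a')
        have h2 := hζ k s'
        linarith
      have hle : ((Tstd P R γ) Qk) s a - ((Tsoft P R γ τ) Qsk) s a ≤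
          γ * ((∑ j ∈ Finset.Icc 1 k, γ ^ j) * ζ + ζ) := by
        simp only [Tstd, Tsoft]
        have : ∑ s', P s a s' * Finset.univ.sup' Finset.univ_nonempty (Qk s') -
            ∑ s', P s a s' * gval (Qsk s') τ ≤
            (∑ j ∈ Finset.Icc 1 k, γ ^ j) * ζ + ζ := by
          rw [← Finset.sum_sub_distrib]
          calc ∑ s', (P s a s' * Finset.univ.sup' Finset.univ_nonempty (Qk s') -
                P s a s' * gval (Qsk s') τ)
              ≤ ∑ s', P s a s' * ((∑ j ∈ Finset.Icc 1 k, γ ^ j) * ζ + ζ) := by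
                apply Finset.sum_le_sum
                intro s' _
                rw [← mul_sub]
                exact mul_le_mul_of_nonneg_left (key s') (hP s a s')
            _ = (∑ j ∈ Finset.Icc 1 k, γ ^ j) * ζ + ζ := by
                rw [← Finset.sum_mul, hP1 s a, one_mul]
        nlinarith [this]
      refine hle.trans (le_of_eq ?_)
      rw [geom_icc γ hγne k, geom_icc γ hγne (k + 1)]
      have h1γ : (1 : ℝ) - γ ≠ 0 := sub_ne_zero.mpr hγne.symm
      field_simp
      ring
  · rw [geom_icc γ hγne k]
end

section
/- Consider a finite discounted MDP whose action set has m elements, and inverse temperature τ ≥ 0. Suppose Rmax ≥ −Rmin ≥ 0, Rmin ≤ R(s,a) ≤ Rmax for all (s,a), the initial Q-function satisfies Rmin ≤ Q_0(s,a) ≤ Rmax for all (s,a), and Q* : S → A → ℝ is a fixed point of the standard Bellman operator T. Let Qmax = Rmax/(1 − γ). Then for every (s,a), liminf_{k→∞} (T_soft^k Q_0)(s,a) ≥ Q*(s,a) − (γ·(m − 1)/(1 − γ)) · max{ 1/(τ + 2), 2·Qmax/(1 + exp(τ)) }. -/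
/-!
The standard Bellman operator is a `γ`-contraction for the sup norm, so its iterates from `Q₀`
converge to its fixed point `Q*`. For `x` with entries in `[-C, C]`, an action whose value lies
`d` below `max x` has softmax weight at most `1 / (1 + e^{τd})`, because a maximising action
carries `e^{τd}` times its weight; since `d / (1 + e^{τd}) ≤ max (1/(τ+2), 2C/(1+e^τ)) =: b`
(split at `d = 1`), the softmax value falls short of `max x` by at most `(m - 1) b`.
The softmax iterates stay in `[-Qmax, Qmax]`, so comparing the two iterations step by step, the
deficit of the softmax iterate behind the standard one obeys `D ↦ γ (D + (m - 1) b)`, whose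
fixed point `γ (m - 1) b / (1 - γ)` bounds it for every `k`.
-/

open Finset Real Filter Topology

noncomputable def softmaxGapBound (τ C : ℝ) : ℝ :=
  max (1 / (τ + 2)) (2 * C / (1 + exp τ))

lemma softmaxGapBound_nonneg (τ C : ℝ) (hτ : 0 ≤ τ) : 0 ≤ softmaxGapBound τ C :=
  (by positivity : (0 : ℝ) ≤ 1 / (τ + 2)).trans (le_max_left _ _)

lemma div_one_add_exp_le_softmaxGapBound {τ C d : ℝ} (hτ : 0 ≤ τ) (hd0 : 0 ≤ d)
    (hdC : d ≤ 2 * C) : d / (1 + exp (τ * d)) ≤ softmaxGapBound τ C := by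
  rw [div_le_iff₀ (by positivity)]
  rcases le_or_gt d 1 with hd1 | hd1
  · have hexp : τ * d + 1 ≤ exp (τ * d) := add_one_le_exp _
    calc d ≤ 1 / (τ + 2) * (1 + exp (τ * d)) := by
          rw [div_mul_eq_mul_div, le_div_iff₀ (by positivity), one_mul]
          nlinarith [mul_nonneg hτ hd0]
      _ ≤ softmaxGapBound τ C * (1 + exp (τ * d)) := by gcongr; exact le_max_left _ _
  · have hexp : exp τ ≤ exp (τ * d) := exp_le_exp.2 (by nlinarith)
    calc d ≤ 2 * C / (1 + exp τ) * (1 + exp (τ * d)) := by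
          rw [div_mul_eq_mul_div, le_div_iff₀ (by positivity)]
          nlinarith [exp_pos τ]
      _ ≤ softmaxGapBound τ C * (1 + exp (τ * d)) := by gcongr; exact le_max_right _ _

section Softmax

variable {A : Type*} [Fintype A] [Nonempty A]

lemma sum_exp_pos (x : A → ℝ) (τ : ℝ) : 0 < ∑ a, exp (τ * x a) :=
  sum_pos (fun _ _ => exp_pos _) univ_nonempty

lemma abs_gval_le {x : A → ℝ} {C : ℝ} (τ : ℝ) (hx : ∀ a, |x a| ≤ C) :
    |gval x τ| ≤ C := by
  have hZ := sum_exp_pos x τ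
  rw [gval, abs_div, abs_of_pos hZ, div_le_iff₀ hZ, mul_sum]
  refine (abs_sum_le_sum_abs _ _).trans (sum_le_sum fun a _ => ?_)
  rw [abs_mul, abs_of_pos (exp_pos _), mul_comm C]
  exact mul_le_mul_of_nonneg_left (hx a) (exp_pos _).le

lemma sub_gval_eq (x : A → ℝ) (τ c : ℝ) :
    c - gval x τ = (∑ a, exp (τ * x a) * (c - x a)) / ∑ a, exp (τ * x a) := by
  have hZ := (sum_exp_pos x τ).ne'
  simp only [gval, mul_sub, sum_sub_distrib, ← sum_mul]
  field_simp

lemma sup'_sub_gval_le {x : A → ℝ} {τ C : ℝ} (hτ : 0 ≤ τ) (hx : ∀ a, |x a| ≤ C) :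
    univ.sup' univ_nonempty x - gval x τ ≤
      ((Fintype.card A : ℝ) - 1) * softmaxGapBound τ C := by
  classical
  obtain ⟨a₀, -, ha₀⟩ := exists_mem_eq_sup' univ_nonempty x
  set M := univ.sup' univ_nonempty x
  set B := softmaxGapBound τ C
  set Z := ∑ a, exp (τ * x a)
  have hterm : ∀ a ∈ univ.erase a₀, exp (τ * x a) * (M - x a) ≤ B * Z := by
    intro a ha
    have hd0 : 0 ≤ M - x a := sub_nonneg.2 (le_sup' x (mem_univ a))
    have hdC : M - x a ≤ 2 * C := by
      rw [ha₀]; linarith [(abs_le.1 (hx a₀)).2, (abs_le.1 (hx a)).1]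
    have hpair : exp (τ * x a) * (1 + exp (τ * (M - x a))) ≤ Z := by
      rw [mul_one_add, ← exp_add,
        show τ * x a + τ * (M - x a) = τ * x a₀ by rw [← ha₀]; ring,
        ← sum_pair (f := fun b => exp (τ * x b)) (ne_of_mem_erase ha)]
      exact sum_le_sum_of_subset_of_nonneg (subset_univ _) fun b _ _ => (exp_pos _).le
    have hgap := div_one_add_exp_le_softmaxGapBound hτ hd0 hdC
    rw [div_le_iff₀ (by positivity)] at hgap
    calc exp (τ * x a) * (M - x a) ≤ exp (τ * x a) * (B * (1 + exp (τ * (M - x a)))) :=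
          mul_le_mul_of_nonneg_left hgap (exp_pos _).le
      _ = B * (exp (τ * x a) * (1 + exp (τ * (M - x a)))) := by ring
      _ ≤ B * Z := mul_le_mul_of_nonneg_left hpair (softmaxGapBound_nonneg τ C hτ)
  have hcard : ((univ.erase a₀).card : ℝ) = (Fintype.card A : ℝ) - 1 := by
    rw [card_erase_of_mem (mem_univ _), card_univ, Nat.cast_pred Fintype.card_pos]
  rw [sub_gval_eq, div_le_iff₀ (sum_exp_pos x τ), ← add_sum_erase _ _ (mem_univ a₀), ← ha₀,
    sub_self, mul_zero, zero_add, mul_assoc, ← hcard, ← nsmul_eq_mul]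
  exact sum_le_card_nsmul _ _ _ hterm

end Softmax

lemma sum_mul_le_of_le {S : Type*} [Fintype S] {p f : S → ℝ} {c : ℝ} (hp : ∀ s, 0 ≤ p s)
    (hp1 : ∑ s, p s = 1) (hf : ∀ s, f s ≤ c) : ∑ s, p s * f s ≤ c :=
  calc ∑ s, p s * f s ≤ ∑ s, p s * c :=
        sum_le_sum fun s _ => mul_le_mul_of_nonneg_left (hf s) (hp s)
    _ = c := by rw [← sum_mul, hp1, one_mul]

lemma abs_sum_mul_le {S : Type*} [Fintype S] {p f : S → ℝ} {c : ℝ} (hp : ∀ s, 0 ≤ p s)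
    (hp1 : ∑ s, p s = 1) (hf : ∀ s, |f s| ≤ c) : |∑ s, p s * f s| ≤ c := by
  refine (abs_sum_le_sum_abs _ _).trans ?_
  simpa only [abs_mul, abs_of_nonneg (hp _)] using sum_mul_le_of_le hp hp1 hf

lemma abs_sup'_sub_sup'_le {A : Type*} [Fintype A] [Nonempty A] {f g : A → ℝ} {c : ℝ}
    (h : ∀ a, |f a - g a| ≤ c) :
    |univ.sup' univ_nonempty f - univ.sup' univ_nonempty g| ≤ c := by
  have hle : ∀ f g : A → ℝ, (∀ a, |f a - g a| ≤ c) →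
      univ.sup' univ_nonempty f ≤ univ.sup' univ_nonempty g + c := fun f g h =>
    sup'_le _ _ fun a _ => by
      linarith [le_sup' g (mem_univ a), (abs_le.1 (h a)).2]
  rw [abs_le]
  constructor
  · linarith [hle g f fun a => abs_sub_comm (f a) (g a) ▸ h a]
  · linarith [hle f g h]

section Bellman

variable {S A : Type*} [Fintype S] [Fintype A] [Nonempty A]
  {P : S → A → S → ℝ} {R : S → A → ℝ} {γ : ℝ}

lemma dist_Tstd_le (hγ : 0 ≤ γ) (hP : ∀ s a s', 0 ≤ P s a s')
    (hP1 : ∀ s a, ∑ s', P s a s' = 1) (Q Q' : S → A → ℝ) :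
    dist (Tstd P R γ Q) (Tstd P R γ Q') ≤ γ * dist Q Q' := by
  have hr : 0 ≤ γ * dist Q Q' := mul_nonneg hγ dist_nonneg
  refine (dist_pi_le_iff hr).2 fun s => (dist_pi_le_iff hr).2 fun a => ?_
  have hsup : ∀ s', |univ.sup' univ_nonempty (Q s') - univ.sup' univ_nonempty (Q' s')| ≤
      dist Q Q' := fun s' => abs_sup'_sub_sup'_le fun b =>
    ((dist_le_pi_dist _ _ b).trans (dist_le_pi_dist Q Q' s'))
  rw [Real.dist_eq, Tstd, Tstd, add_sub_add_left_eq_sub, ← mul_sub, ← sum_sub_distrib,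
    abs_mul, abs_of_nonneg hγ]
  simp only [← mul_sub]
  exact mul_le_mul_of_nonneg_left (abs_sum_mul_le (hP s a) (hP1 s a) hsup) hγ

lemma tendsto_iterate_Tstd (hγ0 : 0 ≤ γ) (hγ1 : γ < 1) (hP : ∀ s a s', 0 ≤ P s a s')
    (hP1 : ∀ s a, ∑ s', P s a s' = 1) {Qstar : S → A → ℝ} (hQstar : Tstd P R γ Qstar = Qstar)
    (Q₀ : S → A → ℝ) : Tendsto (fun k => (Tstd P R γ)^[k] Q₀) atTop (𝓝 Qstar) := by
  have hT : ContractingWith ⟨γ, hγ0⟩ (Tstd P R γ) :=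
    ⟨hγ1, LipschitzWith.of_dist_le_mul fun Q Q' => dist_Tstd_le hγ0 hP hP1 Q Q'⟩
  rw [hT.fixedPoint_unique hQstar]
  exact hT.tendsto_iterate_fixedPoint Q₀

lemma abs_iterate_Tsoft_le {τ r K : ℝ} (hγ : 0 ≤ γ) (hP : ∀ s a s', 0 ≤ P s a s')
    (hP1 : ∀ s a, ∑ s', P s a s' = 1) (hR : ∀ s a, |R s a| ≤ r) (hK : r + γ * K ≤ K)
    {Q₀ : S → A → ℝ} (hQ₀ : ∀ s a, |Q₀ s a| ≤ K) (k : ℕ) (s : S) (a : A) :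
    |(Tsoft P R γ τ)^[k] Q₀ s a| ≤ K := by
  have hmaps :
      Set.MapsTo (Tsoft P R γ τ) {Q | ∀ s a, |Q s a| ≤ K} {Q | ∀ s a, |Q s a| ≤ K} :=
    fun Q hQ s a => calc
      |Tsoft P R γ τ Q s a| ≤ |R s a| + γ * |∑ s', P s a s' * gval (Q s') τ| := by
          rw [Tsoft, ← abs_of_nonneg hγ, ← abs_mul, abs_of_nonneg hγ]; exact abs_add_le _ _
      _ ≤ r + γ * K := by
          gcongr
          · exact hR s a
          · exact abs_sum_mul_le (hP s a) (hP1 s a) fun s' => abs_gval_le τ (hQ s')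
      _ ≤ K := hK
  exact hmaps.iterate k hQ₀ s a

lemma Tstd_le_Tsoft_add {τ c : ℝ} (hγ : 0 ≤ γ) (hP : ∀ s a s', 0 ≤ P s a s')
    (hP1 : ∀ s a, ∑ s', P s a s' = 1) {Q Q' : S → A → ℝ}
    (h : ∀ s', univ.sup' univ_nonempty (Q s') ≤ gval (Q' s') τ + c) (s : S) (a : A) :
    Tstd P R γ Q s a ≤ Tsoft P R γ τ Q' s a + γ * c := by
  have hsum : ∑ s', P s a s' * (univ.sup' univ_nonempty (Q s') - gval (Q' s') τ) ≤ c :=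
    sum_mul_le_of_le (hP s a) (hP1 s a) fun s' => by linarith [h s']
  simp only [mul_sub, sum_sub_distrib] at hsum
  have hγsum := mul_le_mul_of_nonneg_left hsum hγ
  rw [mul_sub] at hγsum
  simp only [Tstd, Tsoft]
  linarith

lemma iterate_Tstd_le_iterate_Tsoft_add {τ C : ℝ} (hγ0 : 0 ≤ γ) (hγ1 : γ < 1)
    (hτ : 0 ≤ τ) (hP : ∀ s a s', 0 ≤ P s a s') (hP1 : ∀ s a, ∑ s', P s a s' = 1)
    {Q₀ : S → A → ℝ} (hbdd : ∀ k s a, |(Tsoft P R γ τ)^[k] Q₀ s a| ≤ C) (k : ℕ) (s : S) (a : A) :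
    (Tstd P R γ)^[k] Q₀ s a ≤ (Tsoft P R γ τ)^[k] Q₀ s a +
      γ * ((Fintype.card A : ℝ) - 1) / (1 - γ) * softmaxGapBound τ C := by
  set D := γ * ((Fintype.card A : ℝ) - 1) / (1 - γ) * softmaxGapBound τ C
  have hm : (1 : ℝ) ≤ Fintype.card A := by exact_mod_cast Fintype.card_pos
  have hDfix : γ * (D + ((Fintype.card A : ℝ) - 1) * softmaxGapBound τ C) = D := by
    simp only [D]; field_simp [(sub_pos.2 hγ1).ne']; ring
  induction k generalizing s a with
  | zero =>
    have : 0 ≤ D := mul_nonneg (div_nonneg (by nlinarith) (by linarith))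
      (softmaxGapBound_nonneg τ C hτ)
    simpa using this
  | succ k ih =>
    rw [Function.iterate_succ_apply', Function.iterate_succ_apply', ← hDfix]
    refine Tstd_le_Tsoft_add hγ0 hP hP1 (fun s' => ?_) s a
    have hgap := sup'_sub_gval_le hτ (hbdd k s')
    have hsup : univ.sup' univ_nonempty ((Tstd P R γ)^[k] Q₀ s') ≤
        univ.sup' univ_nonempty ((Tsoft P R γ τ)^[k] Q₀ s') + D :=
      sup'_le _ _ fun b _ => by
        linarith [ih s' b, le_sup' (fun b => (Tsoft P R γ τ)^[k] Q₀ s' b) (mem_univ b)]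
    linarith

end Bellman

lemma sub_le_liminf_of_tendsto {ι : Type*} {l : Filter ι} [l.NeBot] {u v : ι → ℝ}
    {x c M : ℝ} (hu : Tendsto u l (𝓝 x)) (hle : ∀ i, u i ≤ v i + c) (hv : ∀ i, v i ≤ M) :
    x - c ≤ liminf v l := by
  rw [← ((hu.sub_const c).liminf_eq)]
  exact liminf_le_liminf (Eventually.of_forall fun i => by linarith [hle i])
    (hu.sub_const c).isBoundedUnder_ge (isCoboundedUnder_ge_of_le l hv)

theorem liminf_tsoft_iterate_ge_fixedPoint_sub_general
    {S A : Type*} [Fintype S] [Fintype A] [Nonempty A]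
    (P : S → A → S → ℝ) (R : S → A → ℝ) (γ τ Rmin Rmax : ℝ)
    (hγ : γ ∈ Set.Ioo (0 : ℝ) 1) (hτ : 0 ≤ τ)
    (hRm : 0 ≤ -Rmin) (hRM : -Rmin ≤ Rmax)
    (hP : ∀ s a s', 0 ≤ P s a s') (hP1 : ∀ s a, ∑ s', P s a s' = 1)
    (hR : ∀ s a, Rmin ≤ R s a ∧ R s a ≤ Rmax)
    (Q0 : S → A → ℝ) (hQ0 : ∀ s a, Rmin ≤ Q0 s a ∧ Q0 s a ≤ Rmax)
    (Qstar : S → A → ℝ) (hQstar : Tstd P R γ Qstar = Qstar)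
    (s : S) (a : A) :
    Filter.liminf (fun k : ℕ => ((Tsoft P R γ τ)^[k] Q0) s a) Filter.atTop ≥
      Qstar s a -
        γ * ((Fintype.card A : ℝ) - 1) / (1 - γ) *
          max (1 / (τ + 2)) (2 * (Rmax / (1 - γ)) / (1 + Real.exp τ)) := by
  obtain ⟨hγ0, hγ1⟩ := hγ
  have h1γ : 0 < 1 - γ := sub_pos.2 hγ1
  have hQmax : Rmax + γ * (Rmax / (1 - γ)) = Rmax / (1 - γ) := by field_simp; ring
  have hRQ : Rmax ≤ Rmax / (1 - γ) := le_div_self (by linarith) h1γ (by linarith)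
  have habs : ∀ {x : ℝ}, Rmin ≤ x ∧ x ≤ Rmax → |x| ≤ Rmax := fun h =>
    abs_le.2 ⟨by linarith [h.1], h.2⟩
  have hbdd := abs_iterate_Tsoft_le (τ := τ) hγ0.le hP hP1 (fun s a => habs (hR s a)) hQmax.le
    (fun s a => (habs (hQ0 s a)).trans hRQ)
  have hlim := tendsto_pi_nhds.1
    (tendsto_pi_nhds.1 (tendsto_iterate_Tstd hγ0.le hγ1 hP hP1 hQstar Q0) s) a
  exact sub_le_liminf_of_tendsto hlim
    (iterate_Tstd_le_iterate_Tsoft_add hγ0.le hγ1 hτ hP hP1 hbdd · s a)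
    (fun k => le_of_abs_le (hbdd k s a))

/-- Lower bound (Theorem 1, part (I)): with `m` actions, rewards and initial
Q-values in `[Rmin, Rmax]` with `Rmax ≥ −Rmin ≥ 0`, and `Q*` a fixed point of the
standard Bellman operator,
`liminf_{k→∞} (T_soft^k Q_0)(s,a) ≥
  Q*(s,a) − (γ(m−1)/(1−γ))·max{1/(τ+2), 2·Qmax/(1+exp τ)}`
where `Qmax = Rmax/(1−γ)`. -/
theorem liminf_tsoft_iterate_ge_fixedPoint_sub
    {S A : Type*} [Fintype S] [Fintype A] [Nonempty S] [Nonempty A]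
    (P : S → A → S → ℝ) (R : S → A → ℝ) (γ τ Rmin Rmax : ℝ)
    (hγ : γ ∈ Set.Ioo (0 : ℝ) 1) (hτ : 0 ≤ τ)
    (hRm : 0 ≤ -Rmin) (hRM : -Rmin ≤ Rmax)
    (hP : ∀ s a s', 0 ≤ P s a s') (hP1 : ∀ s a, ∑ s', P s a s' = 1)
    (hR : ∀ s a, Rmin ≤ R s a ∧ R s a ≤ Rmax)
    (Q0 : S → A → ℝ) (hQ0 : ∀ s a, Rmin ≤ Q0 s a ∧ Q0 s a ≤ Rmax)
    (Qstar : S → A → ℝ) (hQstar : Tstd P R γ Qstar = Qstar)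
    (s : S) (a : A) :
    Filter.liminf (fun k : ℕ => ((Tsoft P R γ τ)^[k] Q0) s a) Filter.atTop ≥
      Qstar s a -
        γ * ((Fintype.card A : ℝ) - 1) / (1 - γ) *
          max (1 / (τ + 2)) (2 * (Rmax / (1 - γ)) / (1 + Real.exp τ)) :=
  liminf_tsoft_iterate_ge_fixedPoint_sub_general P R γ τ Rmin Rmax hγ hτ hRm hRM hP hP1 hR Q0 hQ0
    Qstar hQstar s a
end
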